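/- arXiv:2007.09940 — 2 statements merged into one kernel-verified Lean document; each statement's English description precedes it below -/
import Mathlib

section
/- For all integers n ≥ 0 and k ≥ 0: s_{n+f_{2k}} ≠ s_n if and only if Φ_k(n) ∈ {f_{2k+1}/2, f_{2k+1}/2 − 1}. -/
/-- The substitution τ: 1 → 101, 0 → 1 on the alphabet {0,1}. -/
def tau (b : ℕ) : List ℕ := if b = 1 then [1, 0, 1] else [1]

/-- The iterated word τ^n(1). -/
def tauIter : ℕ → List ℕ
  | 0 => [1]
  | n + 1 => ((tauIter n).map tau).flatten

/-- `s` is the fixed point of τ beginning with 1: it agrees with every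
iterate `τ^n(1)` on its length. -/
def IsFixedSeq (s : ℕ → ℕ) : Prop :=
  ∀ n j, j < (tauIter n).length → s j = (tauIter n).getD j 0

/-- The sequence (f_n): f_0 = 1, f_1 = 2, f_{2n+2} = f_{2n} + f_{2n+1},
f_{2n+3} = f_{2n} + f_{2n+2}. -/
def IsFSeq (f : ℕ → ℕ) : Prop :=
  f 0 = 1 ∧ f 1 = 2 ∧ (∀ n, f (2*n+2) = f (2*n) + f (2*n+1)) ∧
    (∀ n, f (2*n+3) = f (2*n) + f (2*n+2))

/-- `a` is the f-representation of `n`: digits in {0,1}, finitely supported,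
a_i a_{i+1} = 0 for all i, a_i a_{i+2} = 0 for even i, and n = Σ a_i f_i. -/
def IsFRep (f : ℕ → ℕ) (n : ℕ) (a : ℕ → ℕ) : Prop :=
  (∀ i, a i ≤ 1) ∧ (∀ i, a i * a (i+1) = 0) ∧
  (∀ i, Even i → a i * a (i+2) = 0) ∧
  ∃ N, (∀ i, N ≤ i → a i = 0) ∧ n = ∑ i ∈ Finset.range N, a i * f i

/-- The truncated f-representation Φ_k(n) = Σ_{i=0}^{2k+2} a_i(n) f_i. -/
def Phi (f : ℕ → ℕ) (a : ℕ → ℕ → ℕ) (k n : ℕ) : ℕ :=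
  ∑ i ∈ Finset.range (2*k+3), a n i * f i

/-- The Hankel determinant H_{m,n} = det (s_{m+i+j})_{0 ≤ i,j ≤ n-1}. -/
def H (s : ℕ → ℕ) (m n : ℕ) : ℤ :=
  (Matrix.of fun i j : Fin n => (s (m + i.1 + j.1) : ℤ)).det

set_option linter.unusedSectionVars false

section FSeqLemmas
variable {f : ℕ → ℕ} (hf : IsFSeq f)
include hf

lemma f_rec1 (m : ℕ) : f (2*m+2) = f (2*m) + f (2*m+1) := hf.2.2.1 m
lemma f_rec2 (m : ℕ) : f (2*m+3) = f (2*m) + f (2*m+2) := hf.2.2.2 m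
lemma f_rec1' (m : ℕ) : f (2*m+4) = f (2*m+2) + f (2*m+3) := by
  have h := hf.2.2.1 (m+1)
  have e : 2*(m+1) = 2*m+2 := by ring
  rw [e] at h; exact h
lemma f_rec2' (m : ℕ) : f (2*m+5) = f (2*m+2) + f (2*m+4) := by
  have h := hf.2.2.2 (m+1)
  have e : 2*(m+1) = 2*m+2 := by ring
  rw [e] at h; exact h

lemma f_pos : ∀ j, 0 < f (2*j) ∧ 0 < f (2*j+1) := by
  intro j
  induction j with
  | zero => exact ⟨by rw [show 2*0 = 0 by rfl, hf.1]; norm_num,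
      by rw [show 2*0+1 = 1 by rfl, hf.2.1]; norm_num⟩
  | succ i ih =>
      have h2 := hf.2.2.1 i
      have h3 := hf.2.2.2 i
      constructor
      · rw [show 2*(i+1) = 2*i+2 by ring, h2]; omega
      · rw [show 2*(i+1)+1 = 2*i+3 by ring, h3, h2]; omega

lemma f_lt_succ : ∀ m, f m < f (m+1) := by
  intro m
  rcases Nat.even_or_odd m with ⟨j, hj⟩ | ⟨j, hj⟩
  · subst hj
    have := f_pos hf j
    induction j with
    | zero => simp only [show (0:ℕ)+0 = 0 by rfl] at *; rw [hf.1, hf.2.1]; norm_num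
    | succ i _ =>
        have h3 := hf.2.2.2 i
        have hp := f_pos hf i
        have : i+1+(i+1) = 2*i+2 := by ring
        rw [this, show 2*i+2+1 = 2*i+3 by rfl, h3]
        omega
  · subst hj
    have h2 := hf.2.2.1 j
    have hp := f_pos hf j
    rw [show 2*j+1+1 = 2*j+2 by rfl, h2]
    omega

lemma f_mono : StrictMono f := strictMono_nat_of_lt_succ (f_lt_succ hf)

lemma f_ge : ∀ m, m + 1 ≤ f m := by
  intro m
  induction m with
  | zero => rw [hf.1]
  | succ i ih => have := f_lt_succ hf i; omega

lemma f_even_odd : ∀ j, ¬ (2 ∣ f (2*j)) ∧ 2 ∣ f (2*j+1) := by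
  intro j
  induction j with
  | zero => rw [show 2*0 = 0 by rfl, show 2*0+1 = 1 by rfl, hf.1, hf.2.1]; omega
  | succ i ih =>
      have h2 := hf.2.2.1 i
      have h3 := hf.2.2.2 i
      constructor
      · rw [show 2*(i+1) = 2*i+2 by ring, h2]; omega
      · rw [show 2*(i+1)+1 = 2*i+3 by ring, h3, h2]; omega

lemma twoP (k : ℕ) : 2 * (f (2*k+1) / 2) = f (2*k+1) :=
  Nat.mul_div_cancel' (f_even_odd hf k).2

end FSeqLemmas

lemma tauIter_struct : ∀ n, tauIter (n+2) = tauIter (n+1) ++ (tauIter n ++ tauIter (n+1)) := by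
  intro n
  induction n with
  | zero => rfl
  | succ i ih =>
      calc tauIter (i+3) = ((tauIter (i+1) ++ (tauIter i ++ tauIter (i+1))).map tau).flatten := by
            show ((tauIter (i+2)).map tau).flatten = _
            rw [ih]
        _ = tauIter (i+2) ++ (tauIter (i+1) ++ tauIter (i+2)) := by
            simp only [List.map_append, List.flatten_append]
            rfl

section SLemmas
variable {f : ℕ → ℕ} (hf : IsFSeq f)
include hf

lemma len_tauIter : ∀ n, (tauIter n).length = f (2*n) := by
  have key : ∀ n, (tauIter n).length = f (2*n) ∧ (tauIter (n+1)).length = f (2*(n+1)) := by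
    intro n
    induction n with
    | zero =>
        refine ⟨by rw [show 2*0 = 0 by rfl, hf.1]; rfl, ?_⟩
        show (tauIter 1).length = f 2
        rw [show (tauIter 1).length = 3 from rfl, hf.2.2.1 0, hf.1, hf.2.1]
    | succ i ih =>
        refine ⟨ih.2, ?_⟩
        rw [show i+1+1 = i+2 by rfl, tauIter_struct i]
        simp only [List.length_append]
        have e1 : 2*(i+1) = 2*i+2 := by ring
        have e2 : 2*(i+2) = 2*i+4 := by ring
        rw [ih.1, ih.2, e1, e2, f_rec1' hf i, f_rec2 hf i]
  exact fun n => (key n).1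

lemma len1 (i : ℕ) : (tauIter (i+1)).length = f (2*i+2) := by
  have := len_tauIter hf (i+1); rw [show 2*(i+1) = 2*i+2 by ring] at this; exact this
lemma len2 (i : ℕ) : (tauIter (i+2)).length = f (2*i+4) := by
  have := len_tauIter hf (i+2); rw [show 2*(i+2) = 2*i+4 by ring] at this; exact this

variable {s : ℕ → ℕ} (hs : IsFixedSeq s)
include hs

lemma s_mid (i z : ℕ) (hz : z < f (2*i)) : s (f (2*i+2) + z) = s z := by
  have l0 := len_tauIter hf i
  have l1 := len1 hf i
  have l2 := len2 hf i
  have e4 := f_rec1' hf i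
  have e3 := f_rec2 hf i
  have hlt : f (2*i+2) + z < (tauIter (i+2)).length := by rw [l2]; omega
  rw [hs (i+2) _ hlt, tauIter_struct i]
  rw [List.getD_append_right _ _ _ _ (by rw [l1]; omega)]
  rw [l1, show f (2*i+2) + z - f (2*i+2) = z from by omega]
  rw [List.getD_append _ _ _ _ (by rw [l0]; omega)]
  exact (hs i z (by rw [l0]; omega)).symm

lemma s_third (i z : ℕ) (hz : z < f (2*i+2)) : s (f (2*i+3) + z) = s z := by
  have l0 := len_tauIter hf i
  have l1 := len1 hf i
  have l2 := len2 hf i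
  have e4 := f_rec1' hf i
  have e3 := f_rec2 hf i
  have hlt : f (2*i+3) + z < (tauIter (i+2)).length := by rw [l2]; omega
  rw [hs (i+2) _ hlt, tauIter_struct i]
  rw [List.getD_append_right _ _ _ _ (by rw [l1]; omega)]
  rw [List.getD_append_right _ _ _ _ (by rw [l0, l1]; omega)]
  rw [l0, l1, show f (2*i+3) + z - f (2*i+2) - f (2*i) = z from by omega]
  exact (hs (i+1) z (by rw [l1]; omega)).symm

lemma s_mid' (i z : ℕ) (hz : z < f (2*i+2)) : s (f (2*i+4) + z) = s z := by
  have h := s_mid hf hs (i+1) z (by rw [show 2*(i+1) = 2*i+2 by ring]; exact hz)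
  rw [show 2*(i+1) = 2*i+2 by ring] at h
  exact h

lemma s_third' (i z : ℕ) (hz : z < f (2*i+4)) : s (f (2*i+5) + z) = s z := by
  have h := s_third hf hs (i+1) z (by rw [show 2*(i+1) = 2*i+2 by ring]; exact hz)
  rw [show 2*(i+1) = 2*i+2 by ring] at h
  exact h

lemma s_MO (i z : ℕ) (hz : z < f (2*i+3)) : s (f (2*i+3) + z) = s z := by
  have e3 := f_rec2 hf i
  have e2 := f_rec1 hf i
  have e4 := f_rec1' hf i
  by_cases h : z < f (2*i+2)
  · exact s_third hf hs i z h
  · push_neg at h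
    have hz' : z - f (2*i+2) < f (2*i) := by omega
    have h1 : f (2*i+3) + z = f (2*i+4) + (z - f (2*i+2)) := by omega
    have h2 : z = f (2*i+2) + (z - f (2*i+2)) := by omega
    rw [h1, s_mid' hf hs i _ (by omega)]
    conv_rhs => rw [h2]
    exact (s_mid hf hs i _ hz').symm

lemma s_ME (i z : ℕ) (hz : z < f (2*i+3)) : s (f (2*i+4) + z) = s z := by
  have e3 := f_rec2 hf i
  have e2 := f_rec1 hf i
  have e4 := f_rec1' hf i
  have e5 := f_rec2' hf i
  by_cases h : z < f (2*i+2)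
  · exact s_mid' hf hs i z h
  · push_neg at h
    have hz' : z - f (2*i+2) < f (2*i) := by omega
    have h1 : f (2*i+4) + z = f (2*i+5) + (z - f (2*i+2)) := by omega
    have h2 : z = f (2*i+2) + (z - f (2*i+2)) := by omega
    rw [h1, s_third' hf hs i _ (by omega)]
    conv_rhs => rw [h2]
    exact (s_mid hf hs i _ hz').symm

end SLemmas

section RepLemmas
variable {f : ℕ → ℕ} (hf : IsFSeq f)
include hf

lemma rep_bound (b : ℕ → ℕ) (hb1 : ∀ i, b i ≤ 1) (hb2 : ∀ i, b i * b (i+1) = 0)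
    (hb3 : ∀ i, Even i → b i * b (i+2) = 0) :
    ∀ m, ∑ i ∈ Finset.range m, b i * f i < f m := by
  intro m
  induction m using Nat.strong_induction_on with
  | _ m IH =>
    match m with
    | 0 => simpa using (by rw [hf.1]; norm_num : (0:ℕ) < f 0)
    | 1 =>
        rw [Finset.sum_range_one, hf.1, hf.2.1]
        have := hb1 0; omega
    | (r+2) =>
        rw [Finset.sum_range_succ]
        by_cases hb : b (r+1) = 0
        · have h1 := IH (r+1) (by omega)
          have h3 := f_lt_succ hf (r+1)
          have hbr1 : f (r+1+1) = f (r+2) := rfl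
          rw [hb]
          omega
        · rw [Finset.sum_range_succ]
          have hb1' : b (r+1) = 1 := by have := hb1 (r+1); omega
          have hbr : b r = 0 := by
            have h := hb2 r; rw [hb1', mul_one] at h; exact h
          rcases Nat.even_or_odd r with ⟨q, hq⟩ | ⟨q, hq⟩
          · have hq' : r = 2*q := by omega
            subst hq'
            have h1 := IH (2*q) (by omega)
            have e1 := hf.2.2.1 q
            rw [hbr, hb1']
            have hbr1 : f (2*q+1+1) = f (2*q+2) := rfl
            omega
          · have hq' : r = 2*q+1 := by omega
            subst hq'
            rw [Finset.sum_range_succ]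
            have hb2q : b (2*q) = 0 := by
              have h := hb3 (2*q) ⟨q, by ring⟩
              have ht : b (2*q+2) = 1 := hb1'
              rw [ht, mul_one] at h; exact h
            have h1 := IH (2*q) (by omega)
            have e2 := hf.2.2.2 q
            rw [hbr, hb1', hb2q]
            have hbr1 : f (2*q+1+1+1) = f (2*q+3) := rfl
            have hbr2 : f (2*q+1+1) = f (2*q+2) := rfl
            have hbr3 : f (2*q+1+2) = f (2*q+3) := rfl
            omega

lemma digit_le {n : ℕ} {b : ℕ → ℕ} (hb : IsFRep f n b) {i : ℕ} (hi : b i = 1) : f i ≤ n := by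
  obtain ⟨N, hN, hsum⟩ := hb.2.2.2
  by_cases h : i < N
  · calc f i = b i * f i := by rw [hi, one_mul]
      _ ≤ ∑ j ∈ Finset.range N, b j * f j :=
        Finset.single_le_sum (f := fun j => b j * f j) (fun j _ => Nat.zero_le _)
          (Finset.mem_range.2 h)
      _ = n := hsum.symm
  · exact absurd (hN i (by omega)) (by omega)

lemma high_zero {n : ℕ} {b : ℕ → ℕ} (hb : IsFRep f n b) {m : ℕ} (hn : n < f m) :
    ∀ i, m ≤ i → b i = 0 := by
  intro i hi
  by_contra h
  have hbi : b i = 1 := by have := hb.1 i; omega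
  have h1 := digit_le hf hb hbi
  have h2 : f m ≤ f i := (f_mono hf).le_iff_le.2 hi
  omega

lemma rep_sum {n : ℕ} {b : ℕ → ℕ} (hb : IsFRep f n b) (M : ℕ)
    (hM : ∀ i, M ≤ i → b i = 0) : n = ∑ i ∈ Finset.range M, b i * f i := by
  obtain ⟨N, hN, hsum⟩ := hb.2.2.2
  have h1 : ∑ i ∈ Finset.range N, b i * f i = ∑ i ∈ Finset.range (max N M), b i * f i :=
    Finset.sum_subset (Finset.range_subset_range.2 (le_max_left _ _))
      (fun i _ hi => by
        rw [hN i (by simp only [Finset.mem_range, not_lt] at hi; omega), zero_mul])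
  have h2 : ∑ i ∈ Finset.range M, b i * f i = ∑ i ∈ Finset.range (max N M), b i * f i :=
    Finset.sum_subset (Finset.range_subset_range.2 (le_max_right _ _))
      (fun i _ hi => by
        rw [hM i (by simp only [Finset.mem_range, not_lt] at hi; omega), zero_mul])
  rw [hsum, h1, ← h2]

lemma Phi_trunc {n : ℕ} {b : ℕ → ℕ} (hb : IsFRep f n b) {k : ℕ} (hn : n < f (2*k+3)) :
    ∑ i ∈ Finset.range (2*k+3), b i * f i = n :=
  (rep_sum hf hb (2*k+3) (high_zero hf hb hn)).symm

lemma exists_top {n : ℕ} (hn : 1 ≤ n) : ∃ t, f t ≤ n ∧ n < f (t+1) := by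
  refine ⟨Nat.findGreatest (fun t => f t ≤ n) n, ?_, ?_⟩
  · exact Nat.findGreatest_spec (P := fun t => f t ≤ n) (Nat.zero_le n)
      (by show f 0 ≤ n; rw [hf.1]; exact hn)
  · by_contra h
    push_neg at h
    have hle : Nat.findGreatest (fun t => f t ≤ n) n + 1 ≤ n := by
      have := f_ge hf (Nat.findGreatest (fun t => f t ≤ n) n + 1)
      omega
    exact absurd h (Nat.findGreatest_is_greatest (P := fun t => f t ≤ n) (n := n)
      (Nat.lt_succ_self _) hle)

lemma top_one {n : ℕ} {b : ℕ → ℕ} (hb : IsFRep f n b) {t : ℕ} (h1 : f t ≤ n)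
    (h2 : n < f (t+1)) : b t = 1 := by
  by_contra h
  have hbt : b t = 0 := by have := hb.1 t; omega
  have hhz : ∀ i, t ≤ i → b i = 0 := by
    intro i hi
    rcases Nat.eq_or_lt_of_le hi with rfl | hlt
    · exact hbt
    · exact high_zero hf hb h2 i hlt
  have := rep_sum hf hb t hhz
  have hbd := rep_bound hf b hb.1 hb.2.1 hb.2.2.1 t
  omega

lemma rep_sub {n : ℕ} {b : ℕ → ℕ} (hb : IsFRep f n b) {t : ℕ} (ht : b t = 1) :
    IsFRep f (n - f t) (Function.update b t 0) := by
  obtain ⟨hb1, hb2, hb3, N, hN, hsum⟩ := hb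
  have hle : ∀ i, Function.update b t 0 i ≤ b i := by
    intro i
    by_cases h : i = t
    · subst h; rw [Function.update_self]; exact Nat.zero_le _
    · rw [Function.update_of_ne h]
  refine ⟨fun i => le_trans (hle i) (hb1 i),
    fun i => Nat.eq_zero_of_le_zero
      (le_trans (Nat.mul_le_mul (hle i) (hle (i+1))) (le_of_eq (hb2 i))),
    fun i hi => Nat.eq_zero_of_le_zero
      (le_trans (Nat.mul_le_mul (hle i) (hle (i+2))) (le_of_eq (hb3 i hi))),
    N, ?_, ?_⟩
  · intro i hi
    have h : i ≠ t ∨ i = t := by omega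
    rcases h with h | rfl
    · rw [Function.update_of_ne h]; exact hN i hi
    · rw [Function.update_self]
  · have htN : t < N := by
      by_contra h
      have := hN t (by omega)
      omega
    have hmem : t ∈ Finset.range N := Finset.mem_range.2 htN
    have e1 : b t * f t + ∑ i ∈ (Finset.range N).erase t, b i * f i
        = ∑ i ∈ Finset.range N, b i * f i :=
      Finset.add_sum_erase _ (fun i => b i * f i) hmem
    have e2 : Function.update b t 0 t * f t
        + ∑ i ∈ (Finset.range N).erase t, Function.update b t 0 i * f i
        = ∑ i ∈ Finset.range N, Function.update b t 0 i * f i :=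
      Finset.add_sum_erase _ (fun i => Function.update b t 0 i * f i) hmem
    have e3 : ∑ i ∈ (Finset.range N).erase t, Function.update b t 0 i * f i
        = ∑ i ∈ (Finset.range N).erase t, b i * f i := by
      refine Finset.sum_congr rfl (fun i hi => ?_)
      rw [Function.update_of_ne (Finset.ne_of_mem_erase hi)]
    rw [Function.update_self, zero_mul, zero_add] at e2
    rw [ht, one_mul] at e1
    omega

lemma rep_unique : ∀ n : ℕ, ∀ b c : ℕ → ℕ, IsFRep f n b → IsFRep f n c → ∀ i, b i = c i := by
  intro n
  induction n using Nat.strong_induction_on with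
  | _ n IH =>
    intro b c hb hc i
    rcases Nat.eq_zero_or_pos n with rfl | hn
    · have hbz : ∀ j, b j = 0 := by
        intro j
        by_contra h
        have hbj : b j = 1 := by have := hb.1 j; omega
        have := digit_le hf hb hbj
        have := f_ge hf j
        omega
      have hcz : ∀ j, c j = 0 := by
        intro j
        by_contra h
        have hcj : c j = 1 := by have := hc.1 j; omega
        have := digit_le hf hc hcj
        have := f_ge hf j
        omega
      rw [hbz i, hcz i]
    · obtain ⟨t, ht1, ht2⟩ := exists_top hf hn
      have hbt := top_one hf hb ht1 ht2
      have hct := top_one hf hc ht1 ht2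
      have hft : 0 < f t := by have := f_ge hf t; omega
      have hb' := rep_sub hf hb hbt
      have hc' := rep_sub hf hc hct
      have := IH (n - f t) (by omega) _ _ hb' hc'
      by_cases h : i = t
      · subst h; rw [hbt, hct]
      · have := this i
        rwa [Function.update_of_ne h, Function.update_of_ne h] at this

lemma Phi_step {a : ℕ → ℕ → ℕ} (ha : ∀ n, IsFRep f n (a n)) {n t k : ℕ}
    (htk : 2*k+3 ≤ t) (h1 : f t ≤ n) (h2 : n < f (t+1)) :
    Phi f a k n = Phi f a k (n - f t) := by
  have hbt := top_one hf (ha n) h1 h2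
  have hb' := rep_sub hf (ha n) hbt
  have hu := rep_unique hf (n - f t) _ _ (ha (n - f t)) hb'
  unfold Phi
  refine (Finset.sum_congr rfl (fun i hi => ?_)).symm
  have hit : i ≠ t := by have := Finset.mem_range.1 hi; omega
  rw [hu i, Function.update_of_ne hit]

lemma Phi_self {a : ℕ → ℕ → ℕ} (ha : ∀ n, IsFRep f n (a n)) {n k : ℕ}
    (hn : n < f (2*k+3)) : Phi f a k n = n :=
  Phi_trunc hf (ha n) hn

end RepLemmas

theorem shift_even_neq_iff (f : ℕ → ℕ) (hf : IsFSeq f) (s : ℕ → ℕ) (hs : IsFixedSeq s) (a : ℕ → ℕ → ℕ) (ha : ∀ n, IsFRep f n (a n)) :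
    ∀ n k : ℕ,
      s (n + f (2*k)) ≠ s n ↔
        (Phi f a k n = f (2*k+1) / 2 ∨ Phi f a k n = f (2*k+1) / 2 - 1) := by
  intro n k
  induction n using Nat.strong_induction_on generalizing k with
  | _ n IH =>
  by_cases hn : n < f (2*k+3)
  · rw [Phi_self hf ha hn]
    rcases k with _ | i
    · -- k = 0
      have e0 : f 0 = 1 := hf.1
      have e1 : f 1 = 2 := hf.2.1
      have e3 : f 3 = 4 := by
        have h2 := hf.2.2.1 0
        have h3 := hf.2.2.2 0
        norm_num at h2 h3
        omega
      have hn4 : n < 4 := by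
        have : (2*0+3 : ℕ) = 3 := by norm_num
        rw [this, e3] at hn
        exact hn
      have ht2 : tauIter 2 = [1,0,1,1,1,0,1] := rfl
      have hlen : (tauIter 2).length = 7 := by rw [ht2]; rfl
      have s0 : s 0 = 1 := by rw [hs 2 0 (by omega), ht2]; rfl
      have s1 : s 1 = 0 := by rw [hs 2 1 (by omega), ht2]; rfl
      have s2 : s 2 = 1 := by rw [hs 2 2 (by omega), ht2]; rfl
      have s3 : s 3 = 1 := by rw [hs 2 3 (by omega), ht2]; rfl
      have s4 : s 4 = 1 := by rw [hs 2 4 (by omega), ht2]; rfl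
      have hg0 : (2*0 : ℕ) = 0 := by norm_num
      have hg1 : (2*0+1 : ℕ) = 1 := by norm_num
      rw [hg0, hg1, e0, e1]
      norm_num
      interval_cases n
      · rw [show (0+1 : ℕ) = 1 from rfl, s0, s1]; simp
      · rw [show (1+1 : ℕ) = 2 from rfl, s1, s2]; simp
      · rw [show (2+1 : ℕ) = 3 from rfl, s2, s3]; simp
      · rw [show (3+1 : ℕ) = 4 from rfl, s3, s4]; simp
    · -- k = i+1
      have n2 : 2*(i+1)+1 = 2*i+3 := by ring
      have n1 : 2*(i+1) = 2*i+2 := by ring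
      rw [n2, n1]
      have hn5 : n < f (2*i+5) := by
        have e : 2*(i+1)+3 = 2*i+5 := by ring
        rwa [e] at hn
      have e2i2 := f_rec1 hf i
      have e2i3 := f_rec2 hf i
      have e2i4 := f_rec1' hf i
      have e2i5 := f_rec2' hf i
      have hposi := f_pos hf i
      have hge1 := f_ge hf (2*i+1)
      have t1 := twoP hf i
      have t2 : 2 * (f (2*i+3) / 2) = f (2*i+3) := by
        have := twoP hf (i+1)
        rwa [n2] at this
      by_cases hR1 : n < f (2*i)
      · have hd : s (n + f (2*i+2)) = s n := by
          rw [add_comm]; exact s_mid hf hs i n hR1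
        rw [hd]
        simp only [ne_eq, not_true_eq_false, false_iff, not_or]
        omega
      · push_neg at hR1
        by_cases hR2 : n < f (2*i+3)
        · -- middle region: use IH at level i
          have hmn : n - f (2*i) < n := by omega
          have hs1 : s (n + f (2*i+2)) = s (n - f (2*i)) := by
            rw [show n + f (2*i+2) = f (2*i+3) + (n - f (2*i)) from by omega]
            exact s_MO hf hs i _ (by omega)
          have hIH := IH (n - f (2*i)) hmn i
          rw [Phi_self hf ha (show n - f (2*i) < f (2*i+3) from by omega)] at hIH
          have hgoal : (s (n + f (2*i+2)) ≠ s n) ↔ (s (n - f (2*i) + f (2*i)) ≠ s (n - f (2*i))) := by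
            rw [hs1, show n - f (2*i) + f (2*i) = n from by omega, ne_comm]
          rw [hgoal, hIH]
          omega
        · push_neg at hR2
          by_cases hR3 : n < f (2*i+4)
          · -- third region
            have hz : n - f (2*i+3) < f (2*i+2) := by omega
            have hA : s n = s (n - f (2*i+3)) := by
              conv_lhs => rw [show n = f (2*i+3) + (n - f (2*i+3)) from by omega]
              exact s_MO hf hs i _ (by omega)
            have hB : s (n + f (2*i+2)) = s (n - f (2*i+3)) := by
              rw [show n + f (2*i+2) = f (2*i+4) + (n - f (2*i+3)) from by omega]
              exact s_mid' hf hs i _ hz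
            rw [hA, hB]
            simp only [ne_eq, not_true_eq_false, false_iff, not_or]
            omega
          · -- fourth region
            push_neg at hR3
            have hz : n - f (2*i+4) < f (2*i+2) := by omega
            have hA : s n = s (n - f (2*i+4)) := by
              conv_lhs => rw [show n = f (2*i+4) + (n - f (2*i+4)) from by omega]
              exact s_mid' hf hs i _ hz
            have hB : s (n + f (2*i+2)) = s (n - f (2*i+4)) := by
              rw [show n + f (2*i+2) = f (2*i+5) + (n - f (2*i+4)) from by omega]
              exact s_third' hf hs i _ (by omega)
            rw [hA, hB]
            simp only [ne_eq, not_true_eq_false, false_iff, not_or]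
            omega
  · -- reduction by the top digit
    push_neg at hn
    have hn1 : 1 ≤ n := by have := f_ge hf (2*k+3); omega
    obtain ⟨t, ht1, ht2⟩ := exists_top hf hn1
    have htk : 2*k+3 ≤ t := by
      by_contra h
      push_neg at h
      have : f (t+1) ≤ f (2*k+3) := (f_mono hf).le_iff_le.2 (by omega)
      omega
    have hΦ := Phi_step hf ha htk ht1 ht2
    have hftpos : 0 < f t := by have := f_ge hf t; omega
    rcases Nat.even_or_odd t with ⟨j, hj⟩ | ⟨j, hj⟩
    · -- t even, t = 2*(j-2)+4
      obtain ⟨i, hi, hik⟩ : ∃ i, t = 2*i+4 ∧ k ≤ i := ⟨j-2, by omega, by omega⟩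
      subst hi
      have ht2' : n < f (2*i+5) := ht2
      have e2i2 := f_rec1 hf i
      have e2i3 := f_rec2 hf i
      have e2i4 := f_rec1' hf i
      have e2i5 := f_rec2' hf i
      have hposi := f_pos hf i
      have hz1 : n - f (2*i+4) < f (2*i+2) := by omega
      have hfk : f (2*k) ≤ f (2*i) := (f_mono hf).le_iff_le.2 (by omega)
      have hE1 : s (n + f (2*k)) = s (n - f (2*i+4) + f (2*k)) := by
        rw [show n + f (2*k) = f (2*i+4) + (n - f (2*i+4) + f (2*k)) from by omega]
        exact s_ME hf hs i _ (by omega)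
      have hE2 : s n = s (n - f (2*i+4)) := by
        conv_lhs => rw [show n = f (2*i+4) + (n - f (2*i+4)) from by omega]
        exact s_ME hf hs i _ (by omega)
      rw [hΦ, hE1, hE2]
      exact IH (n - f (2*i+4)) (by omega) k
    · -- t odd, t = 2*(j-1)+3
      obtain ⟨i, hi, hik⟩ : ∃ i, t = 2*i+3 ∧ k ≤ i := ⟨j-1, by omega, by omega⟩
      subst hi
      have ht2' : n < f (2*i+4) := ht2
      have e2i2 := f_rec1 hf i
      have e2i3 := f_rec2 hf i
      have e2i4 := f_rec1' hf i
      have hposi := f_pos hf i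
      have hz1 : n - f (2*i+3) < f (2*i+2) := by omega
      have hfk : f (2*k) ≤ f (2*i) := (f_mono hf).le_iff_le.2 (by omega)
      have hE1 : s (n + f (2*k)) = s (n - f (2*i+3) + f (2*k)) := by
        rw [show n + f (2*k) = f (2*i+3) + (n - f (2*i+3) + f (2*k)) from by omega]
        exact s_MO hf hs i _ (by omega)
      have hE2 : s n = s (n - f (2*i+3)) := by
        conv_lhs => rw [show n = f (2*i+3) + (n - f (2*i+3)) from by omega]
        exact s_MO hf hs i _ (by omega)
      rw [hΦ, hE1, hE2]
      exact IH (n - f (2*i+3)) (by omega) k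
end

section
/- Let k ≥ 0, let γ ∈ E'_k, and let r be an integer with 1 ≤ r ≤ f_{2k} and γ − f_{2k+2} + r ≥ 0. Then H_{γ−f_{2k+2}+r, f_{2k+1}} = (−1)^{r+1} · H_{f_{2k+3}/2 − f_{2k+1}, f_{2k+1}}. (Here f_{2k+3}/2 is the smallest element of E'_k.) -/
/-!
The word `τ^(n+2)(1) = τ^(n+1)(1) τ^n(1) τ^(n+1)(1)` has length `f (2n+4)`, so `s` repeats
itself after the shifts `f (2n+2)` and `f (2n+3)`; by induction, the prefix of `s` of length about
`f (2j+3) / 2` has the periods `f (2j+1)` and `f (2j+2)`.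

Write `γ = Σ_{i<T} a_i f_i` and add the digits above `2k+2` one at a time. If `S` is the partial
sum below a new top digit `f T`, then `f T` is a period of `s` on `[0, S + f (2k+1) - 2]`, so
the window of length `2 f (2k+1) - 1` at `γ - f (2k+1)` agrees with the one at
`f (2k+3) / 2 - f (2k+1)`, and `s` has period `f (2k+1)` on `(γ - f (2k+2), γ - 2]`.

Moving a Hankel matrix of size `n` one step along a stretch where `s` has period `n` rotates
its columns cyclically, which for even `n = f (2k+1)` changes the sign of the determinant. From
`γ + r - f (2k+2)` to `γ - f (2k+1)` there are `f (2k) - r` such steps, and `f (2k)` is odd.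
-/

open Finset

namespace IsFSeq

variable {f : ℕ → ℕ}

theorem apply_two_mul_add_two (hf : IsFSeq f) (n : ℕ) : f (2*n+2) = f (2*n) + f (2*n+1) :=
  hf.2.2.1 n

theorem apply_two_mul_add_three (hf : IsFSeq f) (n : ℕ) : f (2*n+3) = f (2*n) + f (2*n+2) :=
  hf.2.2.2 n

theorem initial_values (hf : IsFSeq f) :
    f 0 = 1 ∧ f 1 = 2 ∧ f 2 = 3 ∧ f 3 = 4 ∧ f 4 = 7 ∧ f 5 = 10 := by
  obtain ⟨h0, h1, he, ho⟩ := hf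
  have h2 : f 2 = f 0 + f 1 := he 0
  have h3 : f 3 = f 0 + f 2 := ho 0
  have h4 : f 4 = f 2 + f 3 := he 1
  have h5 : f 5 = f 2 + f 4 := ho 1
  omega

theorem pos (hf : IsFSeq f) (m : ℕ) : 0 < f m := by
  have key : ∀ n, 0 < f (2*n) ∧ 0 < f (2*n+1) := by
    intro n
    induction n with
    | zero => simp [hf.1, hf.2.1]
    | succ n ih =>
      have h2 : f (2*(n+1)) = f (2*n) + f (2*n+1) := hf.apply_two_mul_add_two n
      have h3 : f (2*(n+1)+1) = f (2*n) + f (2*n+2) := hf.apply_two_mul_add_three n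
      omega
  obtain ⟨n, rfl | rfl⟩ := Nat.even_or_odd' m
  exacts [(key n).1, (key n).2]

theorem strictMono (hf : IsFSeq f) : StrictMono f := by
  refine strictMono_nat_of_lt_succ fun m => ?_
  obtain ⟨n, rfl | rfl⟩ := Nat.even_or_odd' m
  · cases n with
    | zero => simp [hf.1, hf.2.1]
    | succ n =>
      show f (2*n+2) < f (2*n+3)
      have := hf.apply_two_mul_add_three n
      have := hf.pos (2*n)
      omega
  · have h : f (2*n+1+1) = f (2*n) + f (2*n+1) := hf.apply_two_mul_add_two n
    have := hf.pos (2*n)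
    omega

theorem even_apply_two_mul_add_one (hf : IsFSeq f) (n : ℕ) : Even (f (2*n+1)) := by
  induction n with
  | zero => simp [hf.2.1]
  | succ n ih =>
    rw [show 2*(n+1)+1 = 2*n+3 by ring, hf.apply_two_mul_add_three, hf.apply_two_mul_add_two,
      ← add_assoc]
    exact (Even.add_self _).add ih

theorem odd_apply_two_mul (hf : IsFSeq f) (n : ℕ) : Odd (f (2*n)) := by
  induction n with
  | zero => simp [hf.1]
  | succ n ih =>
    rw [show 2*(n+1) = 2*n+2 by ring, hf.apply_two_mul_add_two]
    exact ih.add_even (hf.even_apply_two_mul_add_one n)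

theorem apply_two_mul_add_one_le (hf : IsFSeq f) (k : ℕ) : f (2*k+1) ≤ 2 * f (2*k) := by
  cases k with
  | zero => simp [hf.1, hf.2.1]
  | succ k =>
    show f (2*k+3) ≤ 2 * f (2*k+2)
    have := hf.apply_two_mul_add_three k
    have := hf.strictMono.monotone (show 2*k ≤ 2*k+2 by omega)
    omega

theorem two_mul_add_le (hf : IsFSeq f) (j : ℕ) : 2 * (f (2*j+1) + f (2*j+2)) ≤ f (2*j+5) := by
  have h2 := hf.apply_two_mul_add_two j
  have h3 := hf.apply_two_mul_add_three j
  have h4 : f (2*j+4) = f (2*j+2) + f (2*j+3) := hf.apply_two_mul_add_two (j+1)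
  have h5 : f (2*j+5) = f (2*j+2) + f (2*j+4) := hf.apply_two_mul_add_three (j+1)
  have := hf.apply_two_mul_add_one_le j
  omega

end IsFSeq

theorem tauIter_add_two (n : ℕ) :
    tauIter (n+2) = tauIter (n+1) ++ tauIter n ++ tauIter (n+1) := by
  induction n with
  | zero => rfl
  | succ n ih =>
    have h := congrArg (fun w => (w.map tau).flatten) ih
    simp only [List.map_append, List.flatten_append] at h
    exact h

theorem IsFSeq.length_tauIter {f : ℕ → ℕ} (hf : IsFSeq f) (n : ℕ) :
    (tauIter n).length = f (2*n) := by
  induction n using Nat.twoStepInduction with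
  | zero => simp [tauIter, hf.1]
  | one => simp [tauIter, tau, hf.initial_values.2.2.1]
  | more n ih ih' =>
    rw [tauIter_add_two]
    simp only [List.length_append, ih, ih']
    have h4 : f (2*n+4) = f (2*n+2) + f (2*n+3) := hf.apply_two_mul_add_two (n+1)
    have := hf.apply_two_mul_add_three n
    show _ = f (2*n+4)
    rw [show 2*(n+1) = 2*n+2 by ring]
    omega

theorem sum_range_mul_eq_or_add_le {f : ℕ → ℕ} (hf : Monotone f) (b : ℕ → ℕ) {m T : ℕ}
    (hmT : m ≤ T) :
    ∑ i ∈ range T, b i * f i = ∑ i ∈ range m, b i * f i ∨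
      ∑ i ∈ range m, b i * f i + f m ≤ ∑ i ∈ range T, b i * f i := by
  induction T, hmT using Nat.le_induction with
  | base => exact .inl rfl
  | succ T hmT ih =>
    rw [sum_range_succ]
    rcases Nat.eq_zero_or_pos (b T) with hbT | hbT
    · simpa [hbT] using ih
    · have : f m ≤ b T * f T := (hf hmT).trans (Nat.le_mul_of_pos_left _ hbT)
      right
      omega

structure IsFDigits (b : ℕ → ℕ) : Prop where
  le_one : ∀ i, b i ≤ 1
  mul_succ_eq_zero : ∀ i, b i * b (i+1) = 0
  mul_add_two_eq_zero : ∀ i, Even i → b i * b (i+2) = 0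

namespace IsFRep

variable {f a : ℕ → ℕ} {n : ℕ}

theorem isFDigits (h : IsFRep f n a) : IsFDigits a :=
  ⟨h.1, h.2.1, h.2.2.1⟩

theorem exists_eq_sum_range (h : IsFRep f n a) (m : ℕ) :
    ∃ T, m ≤ T ∧ n = ∑ i ∈ range T, a i * f i := by
  obtain ⟨N, hN, hn⟩ := h.2.2.2
  refine ⟨max N m, le_max_right _ _, hn.trans ?_⟩
  exact sum_subset (range_subset_range.mpr (le_max_left _ _)) fun i _ hi => by
    simp [hN i (by simpa using hi)]

end IsFRep

namespace IsFDigits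

variable {f b : ℕ → ℕ}

theorem eq_zero_or_eq_one (hb : IsFDigits b) (i : ℕ) : b i = 0 ∨ b i = 1 := by
  have := hb.le_one i
  omega

theorem eq_zero_of_succ_eq_one (hb : IsFDigits b) {i : ℕ} (h : b (i+1) = 1) : b i = 0 := by
  simpa [h] using hb.mul_succ_eq_zero i

theorem eq_zero_of_add_two_eq_one (hb : IsFDigits b) {i : ℕ} (hi : Even i) (h : b (i+2) = 1) :
    b i = 0 := by
  simpa [h] using hb.mul_add_two_eq_zero i hi

theorem sum_range_lt (hb : IsFDigits b) (hf : IsFSeq f) (M : ℕ) :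
    ∑ i ∈ range M, b i * f i < f M := by
  induction M using Nat.strong_induction_on with
  | _ M ih =>
  obtain ⟨t, rfl | rfl⟩ := Nat.even_or_odd' M
  · cases t with
    | zero => simpa using hf.pos 0
    | succ t =>
      show ∑ i ∈ range (2*t+1+1), b i * f i < f (2*t+2)
      have := hf.apply_two_mul_add_two t
      rw [sum_range_succ]
      rcases hb.eq_zero_or_eq_one (2*t+1) with h | h
      · have := ih (2*t+1) (by omega)
        simp only [h, zero_mul, add_zero]
        omega
      · have := ih (2*t) (by omega)
        rw [sum_range_succ, hb.eq_zero_of_succ_eq_one h, h]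
        omega
  · rw [sum_range_succ]
    rcases hb.eq_zero_or_eq_one (2*t) with h | h
    · have := ih (2*t) (by omega)
      have := hf.strictMono (show 2*t < 2*t+1 by omega)
      simp only [h, zero_mul, add_zero]
      omega
    cases t with
    | zero => simp [show b 0 = 1 from h, hf.1, hf.2.1]
    | succ u =>
      have h1 : b (2*u+1) = 0 := hb.eq_zero_of_succ_eq_one h
      have h0 : b (2*u) = 0 := hb.eq_zero_of_add_two_eq_one (even_two_mul u) h
      have := ih (2*u) (by omega)
      have := hf.apply_two_mul_add_three u
      show ∑ i ∈ range (2*u+1+1), b i * f i + b (2*u+2) * f (2*u+2) < f (2*u+3)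
      rw [sum_range_succ, sum_range_succ, h0, h1, show b (2*u+2) = 1 from h]
      omega

theorem sum_range_lt_of_eq_one (hb : IsFDigits b) (hf : IsFSeq f) {j T : ℕ}
    (hT : T = 2*j+3 ∨ T = 2*j+4) (hbT : b T = 1) :
    ∑ i ∈ range T, b i * f i < f (2*j+2) := by
  have hlt := hb.sum_range_lt hf (2*j+2)
  rcases hT with rfl | rfl
  · rw [sum_range_succ, hb.eq_zero_of_succ_eq_one hbT, zero_mul, add_zero]
    exact hlt
  · have h3 : b (2*j+3) = 0 := hb.eq_zero_of_succ_eq_one hbT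
    have h2 : b (2*j+2) = 0 := hb.eq_zero_of_add_two_eq_one ⟨j+1, by ring⟩ hbT
    rw [sum_range_succ, sum_range_succ, h2, h3]
    simpa using hlt

end IsFDigits

namespace IsFixedSeq

variable {f s b : ℕ → ℕ}

theorem apply_f_add_three (hs : IsFixedSeq s) (hf : IsFSeq f) {n y : ℕ} (hy : y < f (2*n+2)) :
    s (f (2*n+3) + y) = s y := by
  have hlen : (tauIter (n+1) ++ tauIter n).length = f (2*n+3) := by
    simp only [List.length_append, hf.length_tauIter, hf.apply_two_mul_add_three]
    ring_nf
  have h4 : f (2*n+4) = f (2*n+2) + f (2*n+3) := hf.apply_two_mul_add_two (n+1)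
  rw [hs (n+2) _ (by rw [hf.length_tauIter]; show _ < f (2*n+4); omega), tauIter_add_two,
    List.getD_append_right _ _ _ _ (by omega), hlen, Nat.add_sub_cancel_left,
    hs (n+1) y (by rwa [hf.length_tauIter])]

theorem apply_f_add_two (hs : IsFixedSeq s) (hf : IsFSeq f) {n z : ℕ} (hz : z < f (2*n)) :
    s (f (2*n+2) + z) = s z := by
  have hlen : (tauIter (n+1)).length = f (2*n+2) := hf.length_tauIter (n+1)
  have h4 : f (2*n+4) = f (2*n+2) + f (2*n+3) := hf.apply_two_mul_add_two (n+1)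
  have := hf.apply_two_mul_add_three n
  rw [hs (n+2) _ (by rw [hf.length_tauIter]; show _ < f (2*n+4); omega), tauIter_add_two,
    List.getD_append _ _ _ _ (by simp only [List.length_append, hlen, hf.length_tauIter]; omega),
    List.getD_append_right _ _ _ _ (by omega), hlen, Nat.add_sub_cancel_left,
    hs n z (by rwa [hf.length_tauIter])]

theorem apply_add_f_two_mul_add_two (hs : IsFixedSeq s) (hf : IsFSeq f) (j : ℕ) :
    ∀ y, 2*y+4 ≤ f (2*j+3) → s (y + f (2*j+2)) = s y := by
  obtain ⟨-, -, h2, h3, h4, h5⟩ := hf.initial_values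
  induction j using Nat.twoStepInduction with
  | zero =>
    intro y hy
    obtain rfl : y = 0 := by simp only [h3] at hy; omega
    simp only [h2]
    rw [hs 3 _ (by decide), hs 3 _ (by decide)]; rfl
  | one =>
    intro y hy
    change 2*y+4 ≤ f 5 at hy
    change s (y + f 4) = s y
    rw [h4]
    have : y ≤ 3 := by omega
    interval_cases y <;> rw [hs 3 _ (by decide), hs 3 _ (by decide)] <;> rfl
  | more j ih _ =>
    intro y hy
    change 2*y+4 ≤ f (2*j+7) at hy
    change s (y + f (2*j+6)) = s y
    have h4 : f (2*j+4) = f (2*j+2) + f (2*j+3) := hf.apply_two_mul_add_two (j+1)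
    have h5 : f (2*j+5) = f (2*j+2) + f (2*j+4) := hf.apply_two_mul_add_three (j+1)
    have h6 : f (2*j+6) = f (2*j+4) + f (2*j+5) := hf.apply_two_mul_add_two (j+2)
    have h7 : f (2*j+7) = f (2*j+4) + f (2*j+6) := hf.apply_two_mul_add_three (j+2)
    have s4 : ∀ z < f (2*j+2), s (f (2*j+4) + z) = s z :=
      fun z => hs.apply_f_add_two hf (n := j+1)
    have s5 : ∀ z < f (2*j+4), s (f (2*j+5) + z) = s z :=
      fun z => hs.apply_f_add_three hf (n := j+1)
    have s6 : ∀ z < f (2*j+4), s (f (2*j+6) + z) = s z :=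
      fun z => hs.apply_f_add_two hf (n := j+2)
    have s7 : ∀ z < f (2*j+6), s (f (2*j+7) + z) = s z :=
      fun z => hs.apply_f_add_three hf (n := j+2)
    rcases lt_or_ge y (f (2*j+4)) with hy4 | hy4
    · rw [add_comm]
      exact s6 y hy4
    rcases lt_or_ge y (f (2*j+5)) with hy5 | hy5
    · obtain ⟨z, rfl⟩ := Nat.exists_eq_add_of_le hy4
      rw [show f (2*j+4) + z + f (2*j+6) = f (2*j+7) + z by omega, s7 z (by omega), s4 z (by omega)]
    · obtain ⟨z, rfl⟩ := Nat.exists_eq_add_of_le hy5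
      rw [show f (2*j+5) + z + f (2*j+6) = f (2*j+7) + (z + f (2*j+2)) by omega,
        s7 _ (by omega), s5 z (by omega)]
      exact ih z (by omega)

theorem apply_add_f_two_mul_add_one (hs : IsFixedSeq s) (hf : IsFSeq f) (j : ℕ) :
    ∀ y, 2*y+4 ≤ f (2*j+3) → s (y + f (2*j+1)) = s y := by
  obtain ⟨-, h1, -, h3, -, h5⟩ := hf.initial_values
  match j with
  | 0 =>
    intro y hy
    obtain rfl : y = 0 := by simp only [h3] at hy; omega
    simp only [h1]
    rw [hs 3 _ (by decide), hs 3 _ (by decide)]; rfl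
  | 1 =>
    intro y hy
    change 2*y+4 ≤ f 5 at hy
    change s (y + f 3) = s y
    rw [h3]
    have : y ≤ 3 := by omega
    interval_cases y <;> rw [hs 3 _ (by decide), hs 3 _ (by decide)] <;> rfl
  | j+2 =>
    intro y hy
    change 2*y+4 ≤ f (2*j+7) at hy
    change s (y + f (2*j+5)) = s y
    have h4 : f (2*j+4) = f (2*j+2) + f (2*j+3) := hf.apply_two_mul_add_two (j+1)
    have h5 : f (2*j+5) = f (2*j+2) + f (2*j+4) := hf.apply_two_mul_add_three (j+1)
    have h6 : f (2*j+6) = f (2*j+4) + f (2*j+5) := hf.apply_two_mul_add_two (j+2)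
    have h7 : f (2*j+7) = f (2*j+4) + f (2*j+6) := hf.apply_two_mul_add_three (j+2)
    have s4 : ∀ z < f (2*j+2), s (f (2*j+4) + z) = s z :=
      fun z => hs.apply_f_add_two hf (n := j+1)
    have s5 : ∀ z < f (2*j+4), s (f (2*j+5) + z) = s z :=
      fun z => hs.apply_f_add_three hf (n := j+1)
    have s6 : ∀ z < f (2*j+4), s (f (2*j+6) + z) = s z :=
      fun z => hs.apply_f_add_two hf (n := j+2)
    rcases lt_or_ge y (f (2*j+4)) with hy4 | hy4
    · rw [add_comm]
      exact s5 y hy4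
    obtain ⟨z, rfl⟩ := Nat.exists_eq_add_of_le hy4
    rw [show f (2*j+4) + z + f (2*j+5) = f (2*j+6) + z by omega, s6 z (by omega)]
    rcases lt_or_ge z (f (2*j+2)) with hz | hz
    · exact (s4 z hz).symm
    obtain ⟨w, rfl⟩ := Nat.exists_eq_add_of_le hz
    rw [show f (2*j+4) + (f (2*j+2) + w) = f (2*j+5) + w by omega, s5 w (by omega), add_comm]
    exact hs.apply_add_f_two_mul_add_two hf j w (by omega)

theorem apply_f_add_four_sub (hs : IsFixedSeq s) (hf : IsFSeq f) {n z : ℕ} (hz0 : 0 < z)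
    (hz : z ≤ f (2*n+2)) : s (f (2*n+4) - z) = s (f (2*n+2) - z) := by
  have h4 : f (2*n+4) = f (2*n+2) + f (2*n+3) := hf.apply_two_mul_add_two (n+1)
  rw [show f (2*n+4) - z = f (2*n+3) + (f (2*n+2) - z) by omega,
    hs.apply_f_add_three hf (by omega)]

theorem apply_f_succ_sub (hs : IsFixedSeq s) (hf : IsFSeq f) (n : ℕ) :
    ∀ z, 0 < z → 2*z+2 ≤ f (2*n+1) →
      s (f (2*n+1) - z) = s (f (2*n) - z) ∧ s (f (2*n+2) - z) = s (f (2*n+1) - z) := by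
  obtain ⟨-, h1, h2, h3, h4, -⟩ := hf.initial_values
  induction n using Nat.twoStepInduction with
  | zero => intro z hz0 hz; simp only [h1] at hz; omega
  | one =>
    intro z hz0 hz
    change 2*z+2 ≤ f 3 at hz
    obtain rfl : z = 1 := by omega
    change s (f 3 - 1) = s (f 2 - 1) ∧ s (f 4 - 1) = s (f 3 - 1)
    simp only [h2, h3, h4]
    rw [hs 3 _ (by decide), hs 3 _ (by decide), hs 3 _ (by decide)]
    decide
  | more n _ ih =>
    intro z hz0 hz
    change 2*z+2 ≤ f (2*n+5) at hz
    change s (f (2*n+5) - z) = s (f (2*n+4) - z) ∧ s (f (2*n+6) - z) = s (f (2*n+5) - z)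
    have h4 : f (2*n+4) = f (2*n+2) + f (2*n+3) := hf.apply_two_mul_add_two (n+1)
    have h5 : f (2*n+5) = f (2*n+2) + f (2*n+4) := hf.apply_two_mul_add_three (n+1)
    have lower : s (f (2*n+5) - z) = s (f (2*n+4) - z) := by
      rcases le_or_gt z (f (2*n+2)) with hz2 | hz2
      · have s4 : ∀ w < f (2*n+2), s (f (2*n+4) + w) = s w :=
          fun w => hs.apply_f_add_two hf (n := n+1)
        rw [show f (2*n+5) - z = f (2*n+4) + (f (2*n+2) - z) by omega, s4 _ (by omega),
          hs.apply_f_add_four_sub hf hz0 hz2]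
      · obtain ⟨w, rfl⟩ := Nat.exists_eq_add_of_lt hz2
        rw [show f (2*n+5) - (f (2*n+2) + w + 1) = f (2*n+4) - (w + 1) by omega,
          show f (2*n+4) - (f (2*n+2) + w + 1) = f (2*n+3) - (w + 1) by omega]
        exact (ih (w+1) (by omega) (show _ ≤ f (2*n+3) by omega)).2
    have upper : s (f (2*n+6) - z) = s (f (2*n+4) - z) :=
      hs.apply_f_add_four_sub hf (n := n+1) hz0 (show z ≤ f (2*n+4) by omega)
    exact ⟨lower, upper.trans lower.symm⟩

theorem apply_f_sub_eq_of_le (hs : IsFixedSeq s) (hf : IsFSeq f) {k M z : ℕ} (hkM : k ≤ M)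
    (hz0 : 0 < z) (hz : 2*z+2 ≤ f k) : s (f M - z) = s (f k - z) := by
  induction M, hkM using Nat.le_induction with
  | base => rfl
  | succ M hkM ih =>
    rw [← ih]
    obtain ⟨m, rfl | rfl⟩ := Nat.even_or_odd' M
    · exact (hs.apply_f_succ_sub hf m z hz0
        (hz.trans (hf.strictMono.monotone (by omega)))).1
    · exact (hs.apply_f_succ_sub hf m z hz0
        (hz.trans (hf.strictMono.monotone hkM))).2

theorem apply_add_f_of_digit_eq_one (hs : IsFixedSeq s) (hf : IsFSeq f) (hb : IsFDigits b)
    {k T w : ℕ} (hkT : 2*k+3 ≤ T) (hbT : b T = 1)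
    (hw : w + 2 ≤ ∑ i ∈ range T, b i * f i + f (2*k+1)) : s (w + f T) = s w := by
  obtain ⟨j, hTj⟩ : ∃ j, T = 2*j+3 ∨ T = 2*j+4 := ⟨(T-3)/2, by omega⟩
  have hsum := hb.sum_range_lt_of_eq_one hf hTj hbT
  have hkj : f (2*k+1) ≤ f (2*j+1) := hf.strictMono.monotone (by omega)
  have hw' : 2*w+4 ≤ f (2*j+5) := by have := hf.two_mul_add_le j; omega
  rcases hTj with rfl | rfl
  · exact hs.apply_add_f_two_mul_add_one hf (j+1) w hw'
  · exact hs.apply_add_f_two_mul_add_two hf (j+1) w hw'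

theorem apply_sum_range_sub_add_eq (hs : IsFixedSeq s) (hf : IsFSeq f) (hb : IsFDigits b)
    {k T y : ℕ} (hkT : 2*k+3 ≤ T) (hk : f (2*k+1) ≤ ∑ i ∈ range (2*k+3), b i * f i)
    (hy : y + 2 ≤ 2 * f (2*k+1)) :
    s (∑ i ∈ range T, b i * f i - f (2*k+1) + y) =
      s (∑ i ∈ range (2*k+3), b i * f i - f (2*k+1) + y) := by
  induction T, hkT using Nat.le_induction with
  | base => rfl
  | succ T hkT ih =>
    have hle : ∑ i ∈ range (2*k+3), b i * f i ≤ ∑ i ∈ range T, b i * f i :=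
      sum_le_sum_of_subset (range_subset_range.mpr hkT)
    rw [sum_range_succ, ← ih]
    rcases hb.eq_zero_or_eq_one T with hbT | hbT
    · simp [hbT]
    · rw [hbT, one_mul, show ∑ i ∈ range T, b i * f i + f T - f (2*k+1) + y =
        ∑ i ∈ range T, b i * f i - f (2*k+1) + y + f T by omega]
      exact hs.apply_add_f_of_digit_eq_one hf hb hkT hbT (by omega)

theorem apply_add_f_two_mul_add_one_of_sum_range (hs : IsFixedSeq s) (hf : IsFSeq f)
    (hb : IsFDigits b) {k T : ℕ} (hkT : 2*k+3 ≤ T)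
    (hG : 2 * ∑ i ∈ range (2*k+3), b i * f i = f (2*k+3)) :
    ∀ x, ∑ i ∈ range T, b i * f i < x + f (2*k+2) →
      x + 2 ≤ ∑ i ∈ range T, b i * f i → s (x + f (2*k+1)) = s x := by
  have h2 := hf.apply_two_mul_add_two k
  have h3 := hf.apply_two_mul_add_three k
  induction T, hkT using Nat.le_induction with
  | base => exact fun x _ hx => hs.apply_add_f_two_mul_add_one hf k x (by omega)
  | succ T hkT ih =>
    intro x hx1 hx2
    rw [sum_range_succ] at hx1 hx2
    rcases hb.eq_zero_or_eq_one T with hbT | hbT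
    · simp only [hbT, zero_mul, add_zero] at hx1 hx2
      exact ih x hx1 hx2
    rw [hbT, one_mul] at hx1 hx2
    have shift := fun w => hs.apply_add_f_of_digit_eq_one hf hb (w := w) hkT hbT
    rcases le_or_gt (f T) x with hTx | hTx
    · obtain ⟨x, rfl⟩ := Nat.exists_eq_add_of_le' hTx
      rw [add_right_comm, shift _ (by omega), shift _ (by omega)]
      exact ih x (by omega) (by omega)
    -- `x` lies just below `f T`, where `s` looks as it does just below `f (2k+1)`.
    have hγ : ∑ i ∈ range T, b i * f i = ∑ i ∈ range (2*k+3), b i * f i := by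
      refine (sum_range_mul_eq_or_add_le hf.strictMono.monotone b hkT).resolve_right fun h => ?_
      have := hf.strictMono (show 2*k+2 < 2*k+3 by omega)
      omega
    obtain ⟨z, hz⟩ := Nat.exists_eq_add_of_lt hTx
    have hz2 : 2*(z+1)+2 ≤ f (2*k+1) := by
      have := hf.even_apply_two_mul_add_one k
      rw [Nat.even_iff] at this
      omega
    rw [show x + f (2*k+1) = f (2*k+1) - (z+1) + f T by omega, shift _ (by omega),
      show x = f T - (z+1) by omega]
    exact (hs.apply_f_sub_eq_of_le hf (by omega) (by omega) hz2).symm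

end IsFixedSeq

theorem H_congr {s : ℕ → ℕ} {m m' n : ℕ}
    (h : ∀ y, y + 2 ≤ 2*n → s (m + y) = s (m' + y)) : H s m n = H s m' n := by
  unfold H
  congr 1
  ext i j
  simp only [Matrix.of_apply, add_assoc]
  rw [h _ (by omega)]

theorem H_succ_of_periodic {s : ℕ → ℕ} {m n : ℕ} (hn : Even n) (hn0 : n ≠ 0)
    (hper : ∀ i < n, s (m + i + n) = s (m + i)) : H s (m+1) n = - H s m n := by
  obtain ⟨n, rfl⟩ : ∃ k, n = k + 1 := ⟨n - 1, by omega⟩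
  have hrot : (Matrix.of fun i j : Fin (n+1) => (s (m + 1 + i.1 + j.1) : ℤ)) =
      (Matrix.of fun i j : Fin (n+1) => (s (m + i.1 + j.1) : ℤ)).submatrix id
        (finRotate (n+1)) := by
    ext i j
    simp only [Matrix.submatrix_apply, Matrix.of_apply, id, finRotate_apply, Fin.val_add_one]
    split_ifs with hj
    · rw [hj, Fin.val_last, add_zero, ← hper i i.2]
      ring_nf
    · ring_nf
  have hodd : Odd n := Nat.not_even_iff_odd.mp (Nat.even_add_one.mp hn)
  rw [H, H, hrot, Matrix.det_permute', sign_finRotate, Nat.add_sub_cancel, hodd.neg_one_pow]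
  simp

theorem H_add_of_periodic {s : ℕ → ℕ} {m n : ℕ} (hn : Even n) (hn0 : n ≠ 0) (d : ℕ)
    (hper : ∀ x, m ≤ x → x + 1 < m + d + n → s (x + n) = s x) :
    H s (m + d) n = (-1)^d * H s m n := by
  induction d with
  | zero => simp
  | succ d ih =>
    rw [← add_assoc, H_succ_of_periodic hn hn0 fun i hi => hper _ (by omega) (by omega),
      ih fun x hx hxd => hper x hx (by omega), pow_succ]
    ring

theorem bottom_edge_T (f : ℕ → ℕ) (hf : IsFSeq f) (s : ℕ → ℕ) (hs : IsFixedSeq s) (a : ℕ → ℕ → ℕ) (ha : ∀ n, IsFRep f n (a n)) :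
    ∀ k γ r : ℕ,
      Phi f a k γ = f (2*k+3) / 2 →
      1 ≤ r → r ≤ f (2*k) → f (2*k+2) ≤ γ + r →
      H s (γ + r - f (2*k+2)) (f (2*k+1)) =
        (-1 : ℤ)^(r+1) * H s (f (2*k+3) / 2 - f (2*k+1)) (f (2*k+1)) := by
  intro k γ r hγ hr1 hr2 hrγ
  obtain ⟨T, hT, hγT⟩ := (ha γ).exists_eq_sum_range (2*k+3)
  have hb := (ha γ).isFDigits
  have hG : 2 * Phi f a k γ = f (2*k+3) :=
    hγ ▸ Nat.two_mul_div_two_of_even (hf.even_apply_two_mul_add_one (k+1))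
  have h2 := hf.apply_two_mul_add_two k
  have h3 := hf.apply_two_mul_add_three k
  have hk := hf.apply_two_mul_add_one_le k
  have window : H s (γ - f (2*k+1)) (f (2*k+1)) =
      H s (f (2*k+3) / 2 - f (2*k+1)) (f (2*k+1)) := by
    refine H_congr fun y hy => ?_
    rw [hγT, ← hγ]
    exact hs.apply_sum_range_sub_add_eq hf hb hT (by unfold Phi at hG; omega) hy
  have period := hs.apply_add_f_two_mul_add_one_of_sum_range hf hb hT hG
  rw [← hγT] at period
  have shift := H_add_of_periodic (s := s) (m := γ + r - f (2*k+2))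
    (hf.even_apply_two_mul_add_one k) (hf.pos _).ne' (f (2*k) - r)
    fun x hx hxd => period x (by omega) (by omega)
  have hsign : (-1 : ℤ)^(f (2*k) - r) = (-1)^(r+1) := by
    have := Nat.odd_iff.mp (hf.odd_apply_two_mul k)
    rw [neg_one_pow_eq_pow_mod_two, neg_one_pow_eq_pow_mod_two (r+1)]
    congr 1
    omega
  rw [← window, show γ - f (2*k+1) = γ + r - f (2*k+2) + (f (2*k) - r) by omega, shift,
    hsign, ← mul_assoc, ← pow_add, (Even.add_self _).neg_one_pow, one_mul]
end
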